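/- arXiv:1508.03852 — 4 statements merged into one kernel-verified Lean document; each statement's English description precedes it below -/
import Mathlib

section
/- Let p, q ≥ 1 and let Σ be a positive-definite symmetric (p+q)×(p+q) real matrix with block decomposition Σ = [[Σ_Y, Σ_YX],[Σ_YXᵀ, Σ_X]], and let Θ = Σ⁻¹ with the corresponding block decomposition Θ = [[Θ_Y, Θ_YX],[Θ_YXᵀ, Θ_X]]. Then rank(Σ_YX) = rank(Θ_YX). -/
open Matrix

lemma posDef_toBlocks₁₁ {n o : Type*} [Fintype n] [Fintype o] [DecidableEq n] [DecidableEq o]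
    {M : Matrix (n ⊕ o) (n ⊕ o) ℝ} (hM : M.PosDef) : M.toBlocks₁₁.PosDef := by
  refine posDef_iff_dotProduct_mulVec.mpr ⟨?_, ?_⟩
  · have h := hM.1
    ext i j
    have := congrFun (congrFun h (Sum.inl i)) (Sum.inl j)
    simpa [toBlocks₁₁, conjTranspose_apply] using this
  · intro x hx
    have hy : (Sum.elim x (0 : o → ℝ)) ≠ 0 := by
      intro h
      apply hx
      ext i
      exact congrFun h (Sum.inl i)
    have := hM.dotProduct_mulVec_pos hy
    have hM' : M = fromBlocks M.toBlocks₁₁ M.toBlocks₁₂ M.toBlocks₂₁ M.toBlocks₂₂ :=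
      (fromBlocks_toBlocks M).symm
    rw [hM'] at this
    simpa [fromBlocks_mulVec, sumElim_dotProduct_sumElim, Function.star_sumElim] using this

lemma posDef_toBlocks₂₂ {n o : Type*} [Fintype n] [Fintype o] [DecidableEq n] [DecidableEq o]
    {M : Matrix (n ⊕ o) (n ⊕ o) ℝ} (hM : M.PosDef) : M.toBlocks₂₂.PosDef := by
  refine posDef_iff_dotProduct_mulVec.mpr ⟨?_, ?_⟩
  · have h := hM.1
    ext i j
    have := congrFun (congrFun h (Sum.inr i)) (Sum.inr j)
    simpa [toBlocks₂₂, conjTranspose_apply] using this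
  · intro x hx
    have hy : (Sum.elim (0 : n → ℝ) x) ≠ 0 := by
      intro h
      apply hx
      ext i
      exact congrFun h (Sum.inr i)
    have := hM.dotProduct_mulVec_pos hy
    have hM' : M = fromBlocks M.toBlocks₁₁ M.toBlocks₁₂ M.toBlocks₂₁ M.toBlocks₂₂ :=
      (fromBlocks_toBlocks M).symm
    rw [hM'] at this
    simpa [fromBlocks_mulVec, sumElim_dotProduct_sumElim, Function.star_sumElim] using this

lemma rank_neg' {m n : Type*} [Fintype m] [Fintype n] [DecidableEq m]
    (A : Matrix m n ℝ) : (-A).rank = A.rank := by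
  have : (-A) = (-1 : Matrix m m ℝ) * A := by simp
  rw [this]
  apply rank_mul_eq_right_of_isUnit_det
  rw [isUnit_iff_ne_zero]
  simp [Matrix.det_neg]

/-- For a positive-definite joint covariance matrix
`Sig = [[Σ_Y, Σ_YX],[Σ_YXᵀ, Σ_X]]` with precision matrix `Th = Sig⁻¹`,
one has `rank(Σ_YX) = rank(Θ_YX)`. -/
theorem stmt_1 (p q : ℕ) (hp : 1 ≤ p) (hq : 1 ≤ q)
    (Sig : Matrix (Fin p ⊕ Fin q) (Fin p ⊕ Fin q) ℝ) (hSig : Sig.PosDef)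
    (Th : Matrix (Fin p ⊕ Fin q) (Fin p ⊕ Fin q) ℝ) (hTh : Th = Sig⁻¹) :
    Sig.toBlocks₁₂.rank = Th.toBlocks₁₂.rank := by
  have hThPD : Th.PosDef := hTh ▸ hSig.inv
  have hA : Sig.toBlocks₁₁.PosDef := posDef_toBlocks₁₁ hSig
  have hD : Th.toBlocks₂₂.PosDef := posDef_toBlocks₂₂ hThPD
  -- Sig * Th = 1
  have hmul : Sig * Th = 1 := by
    rw [hTh, Matrix.mul_nonsing_inv _ hSig.det_pos.ne'.isUnit]
  have key : Sig.toBlocks₁₁ * Th.toBlocks₁₂ + Sig.toBlocks₁₂ * Th.toBlocks₂₂ = 0 := by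
    have h := congrArg Matrix.toBlocks₁₂ hmul
    rw [← fromBlocks_toBlocks Sig, ← fromBlocks_toBlocks Th, fromBlocks_multiply] at h
    simp only [toBlocks_fromBlocks₁₂] at h
    rw [h]; ext i j; simp [toBlocks₁₂]
  have h1 : Sig.toBlocks₁₂ * Th.toBlocks₂₂ = -(Sig.toBlocks₁₁ * Th.toBlocks₁₂) := by
    linear_combination (norm := noncomm_ring) key
  calc Sig.toBlocks₁₂.rank
      = (Sig.toBlocks₁₂ * Th.toBlocks₂₂).rank :=
        (rank_mul_eq_left_of_isUnit_det _ _ hD.det_pos.ne'.isUnit).symm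
    _ = (-(Sig.toBlocks₁₁ * Th.toBlocks₁₂)).rank := by rw [h1]
    _ = (Sig.toBlocks₁₁ * Th.toBlocks₁₂).rank := rank_neg' _
    _ = Th.toBlocks₁₂.rank := rank_mul_eq_right_of_isUnit_det _ _ hA.det_pos.ne'.isUnit
end

section
/- Let Σ be a positive-definite symmetric p×p real matrix and let r ≤ p be a natural number. Then the following are equivalent: (a) there exist a diagonal positive-definite matrix D and a positive-semidefinite matrix L with rank(L) = r such that Σ = D + L; (b) there exist a diagonal positive-definite matrix D' and a positive-semidefinite matrix L' with rank(L') = r such that Σ⁻¹ = D' − L'. -/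
/-!
If `A = B + L`, the resolvent identity `A⁻¹ - B⁻¹ = A⁻¹ (B - A) B⁻¹` (the Woodbury formula in
disguise) gives `A⁻¹ = B⁻¹ - A⁻¹ L B⁻¹`. When `B` is positive definite and `L` positive
semidefinite, `A⁻¹ L B⁻¹ = A⁻¹ (L + L B⁻¹ L) A⁻¹` is a congruence of a positive semidefinite
matrix, and it has the rank of `L` since `A⁻¹` and `B⁻¹` are invertible.

Applied to `Σ = D + L` this is the forward direction. For the converse, `Σ⁻¹ = D' - L'` reads
`D' = Σ⁻¹ + L'`, and the same identity with `Σ⁻¹` in the role of `B` gives `D'⁻¹ = Σ - M`.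
-/

open Matrix
open scoped ComplexOrder

namespace Matrix

variable {n α 𝕜 : Type*} [Fintype n] [DecidableEq n] [CommRing α] [RCLike 𝕜]

theorem IsDiag.inv {D : Matrix n n α} (hD : D.IsDiag) : D⁻¹.IsDiag := by
  rw [← hD.diagonal_diag, inv_diagonal]
  exact isDiag_diagonal _

theorem inv_eq_inv_sub_of_eq_add {A B L : Matrix n n α} (hA : IsUnit A) (hB : IsUnit B)
    (h : A = B + L) : A⁻¹ = B⁻¹ - A⁻¹ * L * B⁻¹ := by
  have hBA : B - A = -L := by rw [h]; abel
  have := inv_sub_inv (iff_of_true hA hB)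
  rw [hBA, mul_neg, neg_mul, sub_eq_iff_eq_add] at this
  exact this.trans (neg_add_eq_sub _ _)

theorem posSemidef_inv_mul_mul_inv_of_eq_add {A B L : Matrix n n 𝕜} (hB : B.PosDef)
    (hL : L.PosSemidef) (h : A = B + L) : (A⁻¹ * L * B⁻¹).PosSemidef := by
  have hA : A.PosDef := h ▸ hB.add_posSemidef hL
  have hLBL : (L + L * B⁻¹ * L).PosSemidef := by
    refine hL.add ?_
    simpa only [hL.isHermitian.eq] using hB.inv.posSemidef.conjTranspose_mul_mul_same L
  have hcongr : A⁻¹ * (L + L * B⁻¹ * L) * A⁻¹ = A⁻¹ * L * B⁻¹ := by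
    have hfactor : L + L * B⁻¹ * L = L * B⁻¹ * A := by
      rw [h, Matrix.mul_add, Matrix.mul_assoc L B⁻¹ B, nonsing_inv_mul _
        ((isUnit_iff_isUnit_det B).mp hB.isUnit), Matrix.mul_one]
    rw [hfactor, Matrix.mul_assoc, Matrix.mul_assoc, Matrix.mul_assoc,
      mul_nonsing_inv _ ((isUnit_iff_isUnit_det A).mp hA.isUnit), Matrix.mul_one,
      Matrix.mul_assoc]
  simpa only [hA.inv.isHermitian.eq, hcongr] using hLBL.conjTranspose_mul_mul_same A⁻¹

theorem PosDef.exists_inv_eq_inv_sub {A B L : Matrix n n 𝕜} (hB : B.PosDef)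
    (hL : L.PosSemidef) (h : A = B + L) :
    ∃ M : Matrix n n 𝕜, M.PosSemidef ∧ M.rank = L.rank ∧ A⁻¹ = B⁻¹ - M := by
  have hA : A.PosDef := h ▸ hB.add_posSemidef hL
  refine ⟨A⁻¹ * L * B⁻¹, posSemidef_inv_mul_mul_inv_of_eq_add hB hL h, ?_,
    inv_eq_inv_sub_of_eq_add hA.isUnit hB.isUnit h⟩
  rw [rank_mul_eq_left_of_isUnit_det _ _ ((isUnit_iff_isUnit_det _).mp hB.inv.isUnit),
    rank_mul_eq_right_of_isUnit_det _ _ ((isUnit_iff_isUnit_det _).mp hA.inv.isUnit)]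

end Matrix

theorem stmt_2_general (p r : ℕ)
    (Sig : Matrix (Fin p) (Fin p) ℝ) (hSig : Sig.PosDef) :
    (∃ D L : Matrix (Fin p) (Fin p) ℝ,
        D.IsDiag ∧ D.PosDef ∧ L.PosSemidef ∧ L.rank = r ∧ Sig = D + L) ↔
    (∃ D' L' : Matrix (Fin p) (Fin p) ℝ,
        D'.IsDiag ∧ D'.PosDef ∧ L'.PosSemidef ∧ L'.rank = r ∧ Sig⁻¹ = D' - L') := by
  constructor
  · rintro ⟨D, L, hDdiag, hD, hL, rfl, rfl⟩
    obtain ⟨M, hM, hrank, hinv⟩ := hD.exists_inv_eq_inv_sub hL rfl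
    exact ⟨D⁻¹, M, hDdiag.inv, hD.inv, hM, hrank, hinv⟩
  · rintro ⟨D', L', hDdiag, hD', hL', rfl, hinv⟩
    obtain ⟨M, hM, hrank, hD'inv⟩ :=
      hSig.inv.exists_inv_eq_inv_sub hL' (eq_sub_iff_add_eq.mp hinv).symm
    rw [nonsing_inv_nonsing_inv _ ((isUnit_iff_isUnit_det _).mp hSig.isUnit)] at hD'inv
    exact ⟨D'⁻¹, M, hDdiag.inv, hD'.inv, hM, hrank, sub_eq_iff_eq_add.mp hD'inv.symm⟩

/-- A positive-definite matrix `Sig` decomposes as a diagonal positive-definite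
matrix plus a rank-`r` positive-semidefinite matrix if and only if its inverse decomposes as a
diagonal positive-definite matrix minus a rank-`r` positive-semidefinite matrix. -/
theorem stmt_2 (p r : ℕ) (hr : r ≤ p)
    (Sig : Matrix (Fin p) (Fin p) ℝ) (hSig : Sig.PosDef) :
    (∃ D L : Matrix (Fin p) (Fin p) ℝ,
        D.IsDiag ∧ D.PosDef ∧ L.PosSemidef ∧ L.rank = r ∧ Sig = D + L) ↔
    (∃ D' L' : Matrix (Fin p) (Fin p) ℝ,
        D'.IsDiag ∧ D'.PosDef ∧ L'.PosSemidef ∧ L'.rank = r ∧ Sig⁻¹ = D' - L') :=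
  stmt_2_general p r Sig hSig
end

section
/- Let p, q ≥ 1, let S⋆ be a symmetric p×p real matrix with deg(S⋆) the maximum number of nonzero entries in any row of S⋆, let δ, γ > 0, m = max{1/δ, 1, 1/γ}, let Θ⋆ be a positive-definite symmetric (p+q)×(p+q) matrix with Σ⋆ = (Θ⋆)⁻¹ and ψ = ‖Σ⋆‖₂, and set C' = (2 + δ·deg(S⋆) + γ)·ψ. Let Δ = (Δ_S, Δ_L, Δ_K, Δ_O) ∈ S^p × S^p × ℝ^{p×q} × S^q with support(Δ_S) ⊆ support(S⋆), and suppose Φ_{δ,γ}(Δ) ≤ 1/(2C'). Then Θ⋆ + 𝒜(Δ) is invertible, and, setting R = (Θ⋆ + 𝒜(Δ))⁻¹ − Σ⋆ + Σ⋆·𝒜(Δ)·Σ⋆, one has Φ_{δ,γ}(𝒜†(R)) ≤ 2·m·ψ·C'²·Φ_{δ,γ}(Δ)². -/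
open Matrix

noncomputable section

/-- Spectral norm (largest singular value / ℓ2→ℓ2 operator norm) of a real matrix. -/
def sNorm {m n : Type*} [Fintype m] [Fintype n] [DecidableEq m] [DecidableEq n]
    (M : Matrix m n ℝ) : ℝ :=
  ‖(Matrix.toEuclideanLin M).toContinuousLinearMap‖

/-- Entrywise sup norm `‖M‖_{ℓ∞} = max_{i,j} |M_{ij}|`. -/
def linf {m n : Type*} [Fintype m] [Fintype n] (M : Matrix m n ℝ) : ℝ :=
  ⨆ i, ⨆ j, |M i j|

/-- `deg M`: the maximum number of nonzero entries in any row of `M`. -/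
def rowDeg {p : ℕ} (M : Matrix (Fin p) (Fin p) ℝ) : ℕ :=
  Finset.univ.sup fun i => (Finset.univ.filter fun j => M i j ≠ 0).card

/-- An element of `S^p × S^p × ℝ^{p×q} × S^q` (symmetry imposed separately). -/
abbrev Quad (p q : ℕ) :=
  Matrix (Fin p) (Fin p) ℝ × Matrix (Fin p) (Fin p) ℝ ×
    Matrix (Fin p) (Fin q) ℝ × Matrix (Fin q) (Fin q) ℝ

/-- The norm `Φ_{δ,γ}(S,L,K,O) = max{‖S‖_{ℓ∞}/δ, ‖L‖₂, ‖K‖₂/γ, ‖O‖₂}`. -/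
def Phi {p q : ℕ} (δ γ : ℝ) (Z : Quad p q) : ℝ :=
  max (max (linf Z.1 / δ) (sNorm Z.2.1)) (max (sNorm Z.2.2.1 / γ) (sNorm Z.2.2.2))

/-- The linear map `𝒜(S,L,K,O) = [[S−L, K],[Kᵀ, O]]`. -/
def calA {p q : ℕ} (Z : Quad p q) : Matrix (Fin p ⊕ Fin q) (Fin p ⊕ Fin q) ℝ :=
  Matrix.fromBlocks (Z.1 - Z.2.1) Z.2.2.1 (Z.2.2.1)ᵀ Z.2.2.2

/-- The adjoint `𝒜†([[Q, K],[Kᵀ, O]]) = (Q, Q, K, O)`. -/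
def calAdag {p q : ℕ} (M : Matrix (Fin p ⊕ Fin q) (Fin p ⊕ Fin q) ℝ) : Quad p q :=
  (M.toBlocks₁₁, M.toBlocks₁₁, M.toBlocks₁₂, M.toBlocks₂₂)

section Helpers

open scoped Matrix.Norms.L2Operator

set_option linter.unusedSectionVars false

variable {m n : Type*} [Fintype m] [Fintype n] [DecidableEq m] [DecidableEq n]

lemma sNorm_eq (M : Matrix m n ℝ) : sNorm M = ‖M‖ := rfl

lemma sNorm_nonneg (M : Matrix m n ℝ) : 0 ≤ sNorm M := by rw [sNorm_eq]; exact norm_nonneg M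

lemma eu_sq (v : n → ℝ) : ‖(WithLp.equiv 2 (n → ℝ)).symm v‖ ^ 2 = ∑ i, v i ^ 2 := by
  rw [EuclideanSpace.norm_eq, Real.sq_sqrt (by positivity)]; simp [sq_abs]

lemma eu_nonneg (v : n → ℝ) : (0:ℝ) ≤ ‖(WithLp.equiv 2 (n → ℝ)).symm v‖ := norm_nonneg _

lemma sNorm_mulVec (M : Matrix m n ℝ) (v : n → ℝ) :
    ‖(WithLp.equiv 2 (m → ℝ)).symm (M *ᵥ v)‖ ≤ sNorm M * ‖(WithLp.equiv 2 (n → ℝ)).symm v‖ := by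
  simpa [sNorm_eq] using M.l2_opNorm_mulVec ((WithLp.equiv 2 (n → ℝ)).symm v)

lemma sNorm_le_bound (M : Matrix m n ℝ) (c : ℝ) (hc : 0 ≤ c)
    (h : ∀ v : n → ℝ, ‖(WithLp.equiv 2 (m → ℝ)).symm (M *ᵥ v)‖ ≤
        c * ‖(WithLp.equiv 2 (n → ℝ)).symm v‖) : sNorm M ≤ c := by
  rw [sNorm]
  refine ContinuousLinearMap.opNorm_le_bound _ hc fun x => ?_
  simpa [Matrix.toEuclideanLin_apply] using h ((WithLp.equiv 2 (n → ℝ)) x)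

lemma sq_le_imp {a b : ℝ} (ha : 0 ≤ a) (hb : 0 ≤ b) (h : a ^ 2 ≤ b ^ 2) : a ≤ b :=
  (pow_le_pow_iff_left₀ ha hb two_ne_zero).mp h

lemma sNorm_add_le (A B : Matrix m n ℝ) : sNorm (A + B) ≤ sNorm A + sNorm B := by
  simp only [sNorm_eq]; exact norm_add_le A B

lemma sNorm_sub_le (A B : Matrix m n ℝ) : sNorm (A - B) ≤ sNorm A + sNorm B := by
  simp only [sNorm_eq]; exact norm_sub_le A B

lemma sNorm_mul_le {l : Type*} [Fintype l] [DecidableEq l] (A : Matrix m n ℝ)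
    (B : Matrix n l ℝ) : sNorm (A * B) ≤ sNorm A * sNorm B := by
  simp only [sNorm_eq]; exact Matrix.l2_opNorm_mul A B

lemma sNorm_transpose (K : Matrix m n ℝ) : sNorm Kᵀ = sNorm K := by
  have h : Kᵀ = Kᴴ := by ext i j; simp [conjTranspose]
  rw [sNorm_eq, sNorm_eq, h, Matrix.l2_opNorm_conjTranspose]

variable {α β : Type*} [Fintype α] [Fintype β] [DecidableEq α] [DecidableEq β]

lemma eu_split (y : α ⊕ β → ℝ) :
    ‖(WithLp.equiv 2 (α ⊕ β → ℝ)).symm y‖ ^ 2 =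
      ‖(WithLp.equiv 2 (α → ℝ)).symm (y ∘ Sum.inl)‖ ^ 2 +
      ‖(WithLp.equiv 2 (β → ℝ)).symm (y ∘ Sum.inr)‖ ^ 2 := by
  rw [EuclideanSpace.norm_eq, EuclideanSpace.norm_eq, EuclideanSpace.norm_eq,
    Real.sq_sqrt (by positivity), Real.sq_sqrt (by positivity), Real.sq_sqrt (by positivity),
    Fintype.sum_sum_type]
  rfl

lemma eu_comp_inl_le (y : α ⊕ β → ℝ) :
    ‖(WithLp.equiv 2 (α → ℝ)).symm (y ∘ Sum.inl)‖ ≤ ‖(WithLp.equiv 2 (α ⊕ β → ℝ)).symm y‖ := by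
  refine sq_le_imp (eu_nonneg _) (eu_nonneg _) ?_
  rw [eu_split y]; nlinarith [sq_nonneg ‖(WithLp.equiv 2 (β → ℝ)).symm (y ∘ Sum.inr)‖]

lemma eu_comp_inr_le (y : α ⊕ β → ℝ) :
    ‖(WithLp.equiv 2 (β → ℝ)).symm (y ∘ Sum.inr)‖ ≤ ‖(WithLp.equiv 2 (α ⊕ β → ℝ)).symm y‖ := by
  refine sq_le_imp (eu_nonneg _) (eu_nonneg _) ?_
  rw [eu_split y]; nlinarith [sq_nonneg ‖(WithLp.equiv 2 (α → ℝ)).symm (y ∘ Sum.inl)‖]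

lemma eu_elim_left (u : α → ℝ) :
    ‖(WithLp.equiv 2 (α ⊕ β → ℝ)).symm (Sum.elim u 0)‖ = ‖(WithLp.equiv 2 (α → ℝ)).symm u‖ := by
  refine sq_le_imp (eu_nonneg _) (eu_nonneg _) ?_ |>.antisymm ?_
  · rw [eu_split]; simp
  · have := eu_comp_inl_le (α := α) (β := β) (Sum.elim u 0)
    simpa using this

lemma eu_elim_right (u : β → ℝ) :
    ‖(WithLp.equiv 2 (α ⊕ β → ℝ)).symm (Sum.elim 0 u)‖ = ‖(WithLp.equiv 2 (β → ℝ)).symm u‖ := by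
  refine sq_le_imp (eu_nonneg _) (eu_nonneg _) ?_ |>.antisymm ?_
  · rw [eu_split]; simp
  · have := eu_comp_inr_le (α := α) (β := β) (Sum.elim 0 u)
    simpa using this

lemma coord_le (v : n → ℝ) (i : n) : |v i| ≤ ‖(WithLp.equiv 2 (n → ℝ)).symm v‖ := by
  refine sq_le_imp (abs_nonneg _) (eu_nonneg _) ?_
  rw [eu_sq, sq_abs]
  exact Finset.single_le_sum (fun j _ => sq_nonneg (v j)) (Finset.mem_univ i)

lemma entry_le_sNorm (M : Matrix m n ℝ) (i : m) (j : n) : |M i j| ≤ sNorm M := by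
  have h1 : M *ᵥ Pi.single j 1 = fun i' => M i' j := by
    rw [Matrix.mulVec_single]; simp; rfl
  have h2 := sNorm_mulVec M (Pi.single j 1)
  have h3 : ‖(WithLp.equiv 2 (n → ℝ)).symm (Pi.single j 1)‖ = 1 := by
    refine sq_le_imp (eu_nonneg _) zero_le_one ?_ |>.antisymm ?_
    · rw [eu_sq]
      rw [show (1:ℝ)^2 = ∑ i', (if i' = j then (1:ℝ) else 0)^2 by simp]
      refine le_of_eq (Finset.sum_congr rfl fun x _ => ?_)
      simp [Pi.single_apply]
    · have := coord_le (Pi.single j 1 : n → ℝ) j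
      simpa using this
  rw [h3, mul_one] at h2
  have h4 := coord_le (M *ᵥ Pi.single j 1) i
  calc |M i j| = |(M *ᵥ Pi.single j 1) i| := by rw [h1]
    _ ≤ ‖(WithLp.equiv 2 (m → ℝ)).symm (M *ᵥ Pi.single j 1)‖ := h4
    _ ≤ sNorm M := h2

-- block extraction lemmas
lemma sNorm_toBlocks₁₁_le (M : Matrix (α ⊕ β) (α ⊕ β) ℝ) : sNorm M.toBlocks₁₁ ≤ sNorm M := by
  refine sNorm_le_bound _ _ (sNorm_nonneg M) fun v => ?_
  set y : α ⊕ β → ℝ := Sum.elim v 0 with hy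
  have hmv : M.toBlocks₁₁ *ᵥ v = (M *ᵥ y) ∘ Sum.inl := by
    ext i; simp [toBlocks₁₁, mulVec, dotProduct, Fintype.sum_sum_type, hy]
  rw [hmv]
  calc ‖(WithLp.equiv 2 (α → ℝ)).symm ((M *ᵥ y) ∘ Sum.inl)‖
      ≤ ‖(WithLp.equiv 2 (α ⊕ β → ℝ)).symm (M *ᵥ y)‖ := eu_comp_inl_le _
    _ ≤ sNorm M * ‖(WithLp.equiv 2 (α ⊕ β → ℝ)).symm y‖ := sNorm_mulVec _ _
    _ = sNorm M * ‖(WithLp.equiv 2 (α → ℝ)).symm v‖ := by rw [hy, eu_elim_left]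

lemma sNorm_toBlocks₁₂_le (M : Matrix (α ⊕ β) (α ⊕ β) ℝ) : sNorm M.toBlocks₁₂ ≤ sNorm M := by
  refine sNorm_le_bound _ _ (sNorm_nonneg M) fun v => ?_
  set y : α ⊕ β → ℝ := Sum.elim 0 v with hy
  have hmv : M.toBlocks₁₂ *ᵥ v = (M *ᵥ y) ∘ Sum.inl := by
    ext i; simp [toBlocks₁₂, mulVec, dotProduct, Fintype.sum_sum_type, hy]
  rw [hmv]
  calc ‖(WithLp.equiv 2 (α → ℝ)).symm ((M *ᵥ y) ∘ Sum.inl)‖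
      ≤ ‖(WithLp.equiv 2 (α ⊕ β → ℝ)).symm (M *ᵥ y)‖ := eu_comp_inl_le _
    _ ≤ sNorm M * ‖(WithLp.equiv 2 (α ⊕ β → ℝ)).symm y‖ := sNorm_mulVec _ _
    _ = sNorm M * ‖(WithLp.equiv 2 (β → ℝ)).symm v‖ := by rw [hy, eu_elim_right]

lemma sNorm_toBlocks₂₂_le (M : Matrix (α ⊕ β) (α ⊕ β) ℝ) : sNorm M.toBlocks₂₂ ≤ sNorm M := by
  refine sNorm_le_bound _ _ (sNorm_nonneg M) fun v => ?_
  set y : α ⊕ β → ℝ := Sum.elim 0 v with hy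
  have hmv : M.toBlocks₂₂ *ᵥ v = (M *ᵥ y) ∘ Sum.inr := by
    ext i; simp [toBlocks₂₂, mulVec, dotProduct, Fintype.sum_sum_type, hy]
  rw [hmv]
  calc ‖(WithLp.equiv 2 (β → ℝ)).symm ((M *ᵥ y) ∘ Sum.inr)‖
      ≤ ‖(WithLp.equiv 2 (α ⊕ β → ℝ)).symm (M *ᵥ y)‖ := eu_comp_inr_le _
    _ ≤ sNorm M * ‖(WithLp.equiv 2 (α ⊕ β → ℝ)).symm y‖ := sNorm_mulVec _ _
    _ = sNorm M * ‖(WithLp.equiv 2 (β → ℝ)).symm v‖ := by rw [hy, eu_elim_right]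

-- fromBlocks embedding lemmas
lemma sNorm_fromBlocks_diag1 (X : Matrix α α ℝ) :
    sNorm (fromBlocks X 0 0 (0 : Matrix β β ℝ)) ≤ sNorm X := by
  refine sNorm_le_bound _ _ (sNorm_nonneg X) fun y => ?_
  rw [Matrix.fromBlocks_mulVec]
  simp only [Matrix.zero_mulVec, add_zero, zero_add]
  rw [eu_elim_left]
  exact (sNorm_mulVec _ _).trans
    (mul_le_mul_of_nonneg_left (eu_comp_inl_le y) (sNorm_nonneg X))

lemma sNorm_fromBlocks_diag2 (O : Matrix β β ℝ) :
    sNorm (fromBlocks (0 : Matrix α α ℝ) 0 0 O) ≤ sNorm O := by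
  refine sNorm_le_bound _ _ (sNorm_nonneg O) fun y => ?_
  rw [Matrix.fromBlocks_mulVec]
  simp only [Matrix.zero_mulVec, add_zero, zero_add]
  rw [eu_elim_right]
  exact (sNorm_mulVec _ _).trans
    (mul_le_mul_of_nonneg_left (eu_comp_inr_le y) (sNorm_nonneg O))

lemma sNorm_fromBlocks_offdiag (K : Matrix α β ℝ) :
    sNorm (fromBlocks 0 K Kᵀ 0) ≤ sNorm K := by
  refine sNorm_le_bound _ _ (sNorm_nonneg K) fun y => ?_
  rw [Matrix.fromBlocks_mulVec]
  simp only [Matrix.zero_mulVec, add_zero, zero_add]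
  refine sq_le_imp (eu_nonneg _) (mul_nonneg (sNorm_nonneg K) (eu_nonneg _)) ?_
  rw [eu_split]
  simp only [Sum.elim_comp_inl, Sum.elim_comp_inr]
  have h1 : ‖(WithLp.equiv 2 (α → ℝ)).symm (K *ᵥ (y ∘ Sum.inr))‖ ^ 2 ≤
      (sNorm K * ‖(WithLp.equiv 2 (β → ℝ)).symm (y ∘ Sum.inr)‖) ^ 2 :=
    pow_le_pow_left₀ (eu_nonneg _) (sNorm_mulVec _ _) 2
  have h2 : ‖(WithLp.equiv 2 (β → ℝ)).symm (Kᵀ *ᵥ (y ∘ Sum.inl))‖ ^ 2 ≤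
      (sNorm K * ‖(WithLp.equiv 2 (α → ℝ)).symm (y ∘ Sum.inl)‖) ^ 2 := by
    refine pow_le_pow_left₀ (eu_nonneg _) ?_ 2
    calc ‖(WithLp.equiv 2 (β → ℝ)).symm (Kᵀ *ᵥ (y ∘ Sum.inl))‖
        ≤ sNorm Kᵀ * ‖(WithLp.equiv 2 (α → ℝ)).symm (y ∘ Sum.inl)‖ := sNorm_mulVec _ _
      _ = sNorm K * ‖(WithLp.equiv 2 (α → ℝ)).symm (y ∘ Sum.inl)‖ := by rw [sNorm_transpose]
  have h3 := eu_split y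
  nlinarith [sq_nonneg (sNorm K)]

-- sparse bound
lemma sNorm_le_of_rowcol (M : Matrix n n ℝ) (c : ℝ) (hc : 0 ≤ c)
    (hrow : ∀ i, ∑ j, |M i j| ≤ c) (hcol : ∀ j, ∑ i, |M i j| ≤ c) : sNorm M ≤ c := by
  refine sNorm_le_bound _ _ hc fun v => ?_
  refine sq_le_imp (eu_nonneg _) (mul_nonneg hc (eu_nonneg _)) ?_
  rw [eu_sq, mul_pow, eu_sq]
  have key : ∀ i, (M *ᵥ v) i ^ 2 ≤ c * ∑ j, |M i j| * v j ^ 2 := by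
    intro i
    have habs : |∑ j, M i j * v j| ≤ ∑ j, |M i j| * |v j| := by
      refine (Finset.abs_sum_le_sum_abs _ _).trans (le_of_eq ?_)
      exact Finset.sum_congr rfl fun j _ => abs_mul _ _
    have hS0 : (0:ℝ) ≤ ∑ j, |M i j| * |v j| :=
      Finset.sum_nonneg fun j _ => mul_nonneg (abs_nonneg _) (abs_nonneg _)
    have h1 : (∑ j, M i j * v j) ^ 2 ≤ (∑ j, |M i j| * |v j|) ^ 2 := by
      rw [← sq_abs (∑ j, M i j * v j)]
      exact pow_le_pow_left₀ (abs_nonneg _) habs 2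
    have hcs := Finset.sum_mul_sq_le_sq_mul_sq Finset.univ
      (fun j => Real.sqrt |M i j|) (fun j => Real.sqrt |M i j| * |v j|)
    have he1 : ∀ j, Real.sqrt |M i j| * (Real.sqrt |M i j| * |v j|) = |M i j| * |v j| := by
      intro j; rw [← mul_assoc, Real.mul_self_sqrt (abs_nonneg _)]
    have he2 : ∀ j, Real.sqrt |M i j| ^ 2 = |M i j| := fun j => Real.sq_sqrt (abs_nonneg _)
    have he3 : ∀ j, (Real.sqrt |M i j| * |v j|) ^ 2 = |M i j| * v j ^ 2 := by
      intro j; rw [mul_pow, Real.sq_sqrt (abs_nonneg _), sq_abs]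
    simp only [he1, he2, he3] at hcs
    have h4 : (∑ j, |M i j|) * (∑ j, |M i j| * v j ^ 2) ≤ c * ∑ j, |M i j| * v j ^ 2 := by
      refine mul_le_mul_of_nonneg_right (hrow i) ?_
      exact Finset.sum_nonneg fun j _ => mul_nonneg (abs_nonneg _) (sq_nonneg _)
    calc (M *ᵥ v) i ^ 2 = (∑ j, M i j * v j) ^ 2 := by rfl
      _ ≤ (∑ j, |M i j| * |v j|) ^ 2 := h1
      _ ≤ (∑ j, |M i j|) * (∑ j, |M i j| * v j ^ 2) := hcs
      _ ≤ c * ∑ j, |M i j| * v j ^ 2 := h4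
  calc ∑ i, (M *ᵥ v) i ^ 2 ≤ ∑ i, c * ∑ j, |M i j| * v j ^ 2 :=
        Finset.sum_le_sum fun i _ => key i
    _ = c * ∑ j, (∑ i, |M i j|) * v j ^ 2 := by
        rw [← Finset.mul_sum, Finset.sum_comm]
        congr 1
        exact Finset.sum_congr rfl fun j _ => by rw [Finset.sum_mul]
    _ ≤ c * ∑ j, c * v j ^ 2 := by
        refine mul_le_mul_of_nonneg_left (Finset.sum_le_sum fun j _ => ?_) hc
        exact mul_le_mul_of_nonneg_right (hcol j) (sq_nonneg _)
    _ = c ^ 2 * ∑ j, v j ^ 2 := by rw [← Finset.mul_sum]; ring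

-- linf lemmas
lemma abs_le_linf (M : Matrix m n ℝ) (i : m) (j : n) : |M i j| ≤ linf M := by
  have h1 : |M i j| ≤ ⨆ j', |M i j'| :=
    le_ciSup (f := fun j' => |M i j'|) (Set.Finite.bddAbove (Set.finite_range _)) j
  exact h1.trans
    (le_ciSup (f := fun i' => ⨆ j', |M i' j'|) (Set.Finite.bddAbove (Set.finite_range _)) i)

lemma linf_le [Nonempty m] [Nonempty n] (M : Matrix m n ℝ) (c : ℝ)
    (h : ∀ i j, |M i j| ≤ c) : linf M ≤ c :=
  ciSup_le fun i => ciSup_le fun j => h i j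

lemma linf_nonneg [Nonempty m] [Nonempty n] (M : Matrix m n ℝ) : 0 ≤ linf M :=
  le_trans (abs_nonneg _) (abs_le_linf M (Classical.arbitrary m) (Classical.arbitrary n))

end Helpers

open scoped Matrix.Norms.L2Operator

set_option maxHeartbeats 1000000 in
/-- Lemma 1 of the paper: the remainder bound
`Φ_{δ,γ}(𝒜†(R)) ≤ 2mψC'²·Φ_{δ,γ}(Δ)²` for
`R = (Θ⋆ + 𝒜(Δ))⁻¹ − Σ⋆ + Σ⋆·𝒜(Δ)·Σ⋆`, valid when `Φ_{δ,γ}(Δ) ≤ 1/(2C')`. -/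
theorem stmt_6 (p q : ℕ) (hp : 1 ≤ p) (hq : 1 ≤ q)
    (δ γ : ℝ) (hδ : 0 < δ) (hγ : 0 < γ)
    (m : ℝ) (hm : m = max (1 / δ) (max 1 (1 / γ)))
    (Sstar : Matrix (Fin p) (Fin p) ℝ) (hSsymm : Sstar.IsSymm)
    (Θstar : Matrix (Fin p ⊕ Fin q) (Fin p ⊕ Fin q) ℝ) (hΘ : Θstar.PosDef)
    (ψ : ℝ) (hψ : ψ = sNorm Θstar⁻¹)
    (C' : ℝ) (hC' : C' = (2 + δ * (rowDeg Sstar : ℝ) + γ) * ψ)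
    (Δ : Quad p q)
    (hΔS : Δ.1.IsSymm) (hΔL : Δ.2.1.IsSymm) (hΔO : Δ.2.2.2.IsSymm)
    (hsupp : ∀ i j, Sstar i j = 0 → Δ.1 i j = 0)
    (hPhi : Phi δ γ Δ ≤ 1 / (2 * C')) :
    IsUnit (Θstar + calA Δ) ∧
      Phi δ γ (calAdag ((Θstar + calA Δ)⁻¹ - Θstar⁻¹ + Θstar⁻¹ * calA Δ * Θstar⁻¹)) ≤
        2 * m * ψ * C' ^ 2 * (Phi δ γ Δ) ^ 2 := by
  haveI : Nonempty (Fin p) := ⟨⟨0, hp⟩⟩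
  haveI : Nonempty (Fin q) := ⟨⟨0, hq⟩⟩
  set Sg := Θstar⁻¹ with hSg
  set A := calA Δ with hA
  set Φ := Phi δ γ Δ with hΦdef
  set d := (rowDeg Sstar : ℝ) with hd
  have hd0 : 0 ≤ d := Nat.cast_nonneg _
  -- component bounds from Phi
  have hΦ_L : sNorm Δ.2.1 ≤ Φ := (le_max_right _ _).trans (le_max_left _ _)
  have hΦ0 : 0 ≤ Φ := (sNorm_nonneg _).trans hΦ_L
  have hΦ_S : linf Δ.1 ≤ δ * Φ := by
    have h1 : linf Δ.1 / δ ≤ Φ := (le_max_left _ _).trans (le_max_left _ _)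
    rw [div_le_iff₀ hδ] at h1
    linarith [h1]
  have hΦ_K : sNorm Δ.2.2.1 ≤ γ * Φ := by
    have h1 : sNorm Δ.2.2.1 / γ ≤ Φ := (le_max_left _ _).trans (le_max_right _ _)
    rw [div_le_iff₀ hγ] at h1
    linarith [h1]
  have hΦ_O : sNorm Δ.2.2.2 ≤ Φ := (le_max_right _ _).trans (le_max_right _ _)
  -- sparse bound on Δ.1
  have hrowΔ : ∀ i, ∑ j, |Δ.1 i j| ≤ d * linf Δ.1 := by
    intro i
    classical
    set s := Finset.univ.filter (fun j => Sstar i j ≠ 0) with hs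
    have hzero : ∀ j ∈ Finset.univ, j ∉ s → |Δ.1 i j| = 0 := by
      intro j _ hj
      rw [hs, Finset.mem_filter] at hj
      push_neg at hj
      have h0 : Sstar i j = 0 := by
        by_contra hne
        exact hne (hj (Finset.mem_univ j))
      rw [hsupp i j h0, abs_zero]
    rw [← Finset.sum_subset (Finset.subset_univ s) hzero]
    have hcard : (s.card : ℝ) ≤ d := by
      rw [hd]
      exact_mod_cast Finset.le_sup (f := fun i => (Finset.univ.filter fun j => Sstar i j ≠ 0).card)
        (Finset.mem_univ i)
    calc ∑ j ∈ s, |Δ.1 i j| ≤ s.card • linf Δ.1 :=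
          Finset.sum_le_card_nsmul s _ _ (fun j _ => abs_le_linf Δ.1 i j)
      _ = (s.card : ℝ) * linf Δ.1 := nsmul_eq_mul _ _
      _ ≤ d * linf Δ.1 := mul_le_mul_of_nonneg_right hcard (linf_nonneg _)
  have hcolΔ : ∀ j, ∑ i, |Δ.1 i j| ≤ d * linf Δ.1 := by
    intro j
    have hsym : ∀ i, Δ.1 i j = Δ.1 j i := fun i => (hΔS.apply i j).symm
    calc ∑ i, |Δ.1 i j| = ∑ i, |Δ.1 j i| := Finset.sum_congr rfl fun i _ => by rw [hsym i]
      _ ≤ d * linf Δ.1 := hrowΔ j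
  have hSnorm : sNorm Δ.1 ≤ d * linf Δ.1 :=
    sNorm_le_of_rowcol _ _ (mul_nonneg hd0 (linf_nonneg _)) hrowΔ hcolΔ
  -- norm bound on A
  have hAnorm : sNorm A ≤ (2 + δ * d + γ) * Φ := by
    have hdecomp : A = Matrix.fromBlocks (Δ.1 - Δ.2.1) 0 0 0 +
        Matrix.fromBlocks 0 Δ.2.2.1 (Δ.2.2.1)ᵀ 0 + Matrix.fromBlocks 0 0 0 Δ.2.2.2 := by
      rw [hA]
      ext (i | i) (j | j) <;> simp [calA, Matrix.fromBlocks]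
    have h1 : sNorm (Matrix.fromBlocks (Δ.1 - Δ.2.1) 0 0 (0 : Matrix (Fin q) (Fin q) ℝ)) ≤
        δ * d * Φ + Φ := by
      refine (sNorm_fromBlocks_diag1 _).trans ?_
      refine (sNorm_sub_le _ _).trans ?_
      have : sNorm Δ.1 ≤ δ * d * Φ := by
        refine hSnorm.trans ?_
        calc d * linf Δ.1 ≤ d * (δ * Φ) := mul_le_mul_of_nonneg_left hΦ_S hd0
          _ = δ * d * Φ := by ring
      linarith [hΦ_L]
    have h2 : sNorm (Matrix.fromBlocks 0 Δ.2.2.1 (Δ.2.2.1)ᵀ 0) ≤ γ * Φ :=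
      (sNorm_fromBlocks_offdiag _).trans hΦ_K
    have h3 : sNorm (Matrix.fromBlocks (0 : Matrix (Fin p) (Fin p) ℝ) 0 0 Δ.2.2.2) ≤ Φ :=
      (sNorm_fromBlocks_diag2 _).trans hΦ_O
    rw [hdecomp]
    calc sNorm (Matrix.fromBlocks (Δ.1 - Δ.2.1) 0 0 0 +
          Matrix.fromBlocks 0 Δ.2.2.1 (Δ.2.2.1)ᵀ 0 + Matrix.fromBlocks 0 0 0 Δ.2.2.2)
        ≤ sNorm (Matrix.fromBlocks (Δ.1 - Δ.2.1) 0 0 0 +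
            Matrix.fromBlocks 0 Δ.2.2.1 (Δ.2.2.1)ᵀ 0) + sNorm (Matrix.fromBlocks 0 0 0 Δ.2.2.2) :=
          sNorm_add_le _ _
      _ ≤ sNorm (Matrix.fromBlocks (Δ.1 - Δ.2.1) 0 0 0) +
            sNorm (Matrix.fromBlocks 0 Δ.2.2.1 (Δ.2.2.1)ᵀ 0) +
            sNorm (Matrix.fromBlocks 0 0 0 Δ.2.2.2) := by
          linarith [sNorm_add_le (Matrix.fromBlocks (Δ.1 - Δ.2.1) 0 0
            (0 : Matrix (Fin q) (Fin q) ℝ)) (Matrix.fromBlocks 0 Δ.2.2.1 (Δ.2.2.1)ᵀ 0)]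
      _ ≤ (δ * d * Φ + Φ) + γ * Φ + Φ := by linarith
      _ = (2 + δ * d + γ) * Φ := by ring
  -- ψ and C' positivity
  have hψ0 : 0 ≤ ψ := by rw [hψ]; exact sNorm_nonneg _
  have hdet : IsUnit Θstar.det := hΘ.det_pos.ne'.isUnit
  have hTS : Θstar * Sg = 1 := Matrix.mul_nonsing_inv _ hdet
  have hST : Sg * Θstar = 1 := Matrix.nonsing_inv_mul _ hdet
  have hψpos : 0 < ψ := by
    rcases hψ0.lt_or_eq with h | h
    · exact h
    · exfalso
      have hz : Sg = 0 := by
        ext i j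
        have h1 := entry_le_sNorm Sg i j
        rw [← hψ, ← h] at h1
        simpa using abs_nonpos_iff.mp (h1.trans (le_of_eq rfl))
      have h2 : (1 : Matrix (Fin p ⊕ Fin q) (Fin p ⊕ Fin q) ℝ)
          (Sum.inl ⟨0, hp⟩) (Sum.inl ⟨0, hp⟩) = 0 := by
        rw [← hST, hz, Matrix.zero_mul]
        rfl
      rw [Matrix.one_apply_eq] at h2
      exact one_ne_zero h2
  have hC'pos : 0 < C' := by
    rw [hC']
    have : (0:ℝ) < 2 + δ * d + γ := by positivity
    exact mul_pos this hψpos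
  have hΦhalf : C' * Φ ≤ 1 / 2 := by
    have h1 : Φ * (2 * C') ≤ 1 := (le_div_iff₀ (by positivity)).mp hPhi
    nlinarith
  have hSA : sNorm (Sg * A) ≤ C' * Φ := by
    calc sNorm (Sg * A) ≤ sNorm Sg * sNorm A := sNorm_mul_le _ _
      _ = ψ * sNorm A := by rw [hψ, hSg]
      _ ≤ ψ * ((2 + δ * d + γ) * Φ) := mul_le_mul_of_nonneg_left hAnorm hψ0
      _ = C' * Φ := by rw [hC']; ring
  -- invertibility
  haveI : CompleteSpace (Matrix (Fin p ⊕ Fin q) (Fin p ⊕ Fin q) ℝ) :=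
    FiniteDimensional.complete ℝ _
  have hlt : ‖-(Sg * A)‖ < 1 := by
    rw [norm_neg, ← sNorm_eq]
    linarith
  have hunit1 : IsUnit (1 + Sg * A) := by
    have hiu := (Units.oneSub (-(Sg * A)) hlt).isUnit
    rw [Units.val_oneSub, sub_neg_eq_add] at hiu
    exact hiu
  have hfact : Θstar + A = Θstar * (1 + Sg * A) := by
    rw [mul_add, mul_one, ← mul_assoc, hTS, one_mul]
  have hUnit : IsUnit (Θstar + A) := by
    rw [hfact]
    exact hΘ.isUnit.mul hunit1
  refine ⟨hUnit, ?_⟩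
  -- the remainder identity
  have hBdet : IsUnit (Θstar + A).det := (Matrix.isUnit_iff_isUnit_det _).mp hUnit
  set B := (Θstar + A)⁻¹ with hB
  have hB1 : (Θstar + A) * B = 1 := Matrix.mul_nonsing_inv _ hBdet
  have hB3 : B + Sg * A * B = Sg := by
    have h2 : Θstar * B + A * B = 1 := by rw [← add_mul]; exact hB1
    have h3 := congrArg (fun X => Sg * X) h2
    simp only [mul_add, ← mul_assoc, hST, one_mul, mul_one] at h3
    exact h3
  have h0 : B - Sg + Sg * A * B = 0 := by
    calc B - Sg + Sg * A * B = (B + Sg * A * B) - Sg := by abel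
      _ = 0 := by rw [hB3]; abel
  have h5 : B - Sg = -(Sg * A * B) := by
    have := eq_neg_of_add_eq_zero_left h0
    exact this
  have key : Sg * A * B + Sg * A * (Sg * A * B) = Sg * A * Sg := by
    have k := congrArg (fun X => Sg * A * X) hB3
    simpa only [mul_add] using k
  have hRid : B - Sg + Sg * A * Sg = Sg * A * (Sg * A * B) := by
    rw [h5, ← key]
    abel
  -- norm of B
  have hBn : sNorm B ≤ 2 * ψ := by
    have h6 : B = Sg - Sg * A * B := eq_sub_of_add_eq hB3
    have h7 : sNorm B ≤ sNorm Sg + sNorm (Sg * A * B) := by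
      nth_rw 1 [h6]
      exact sNorm_sub_le _ _
    have h8 : sNorm (Sg * A * B) ≤ sNorm (Sg * A) * sNorm B := sNorm_mul_le _ _
    have h9 : sNorm (Sg * A) ≤ 1 / 2 := hSA.trans hΦhalf
    have h10 : sNorm Sg = ψ := hψ.symm
    nlinarith [sNorm_nonneg B, sNorm_nonneg (Sg * A), sNorm_nonneg (Sg * A * B)]
  -- norm of R
  set R := B - Sg + Sg * A * Sg with hRdef
  have hRn : sNorm R ≤ 2 * ψ * (C' * Φ) ^ 2 := by
    rw [hRid]
    have e1 : sNorm (Sg * A * (Sg * A * B)) ≤ sNorm (Sg * A) * sNorm (Sg * A * B) :=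
      sNorm_mul_le _ _
    have e2 : sNorm (Sg * A * B) ≤ sNorm (Sg * A) * sNorm B := sNorm_mul_le _ _
    calc sNorm (Sg * A * (Sg * A * B)) ≤ sNorm (Sg * A) * sNorm (Sg * A * B) := e1
      _ ≤ sNorm (Sg * A) * (sNorm (Sg * A) * sNorm B) :=
          mul_le_mul_of_nonneg_left e2 (sNorm_nonneg _)
      _ ≤ (C' * Φ) * ((C' * Φ) * (2 * ψ)) :=
          mul_le_mul hSA
            (mul_le_mul hSA hBn (sNorm_nonneg _) (mul_nonneg hC'pos.le hΦ0))
            (mul_nonneg (sNorm_nonneg _) (sNorm_nonneg _)) (mul_nonneg hC'pos.le hΦ0)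
      _ = 2 * ψ * (C' * Φ) ^ 2 := by ring
  -- m facts
  have hm1 : (1:ℝ) ≤ m := by rw [hm]; exact (le_max_left 1 (1/γ)).trans (le_max_right _ _)
  have hmδ : 1 / δ ≤ m := by rw [hm]; exact le_max_left _ _
  have hmγ : 1 / γ ≤ m := by rw [hm]; exact (le_max_right 1 (1/γ)).trans (le_max_right _ _)
  have hm0 : (0:ℝ) ≤ m := zero_le_one.trans hm1
  have hr0 : 0 ≤ sNorm R := sNorm_nonneg R
  -- assemble
  have hlinfR : linf R.toBlocks₁₁ ≤ sNorm R := by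
    refine linf_le _ _ fun i j => ?_
    have := entry_le_sNorm R (Sum.inl i) (Sum.inl j)
    simpa [Matrix.toBlocks₁₁] using this
  have hmR : m * sNorm R ≤ 2 * m * ψ * C' ^ 2 * Φ ^ 2 := by
    calc m * sNorm R ≤ m * (2 * ψ * (C' * Φ) ^ 2) := mul_le_mul_of_nonneg_left hRn hm0
      _ = 2 * m * ψ * C' ^ 2 * Φ ^ 2 := by ring
  have b1 : linf R.toBlocks₁₁ / δ ≤ m * sNorm R := by
    calc linf R.toBlocks₁₁ / δ ≤ sNorm R / δ := (div_le_div_iff_of_pos_right hδ).mpr hlinfR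
      _ = (1 / δ) * sNorm R := by ring
      _ ≤ m * sNorm R := mul_le_mul_of_nonneg_right hmδ hr0
  have b2 : sNorm R.toBlocks₁₁ ≤ m * sNorm R := by
    calc sNorm R.toBlocks₁₁ ≤ sNorm R := sNorm_toBlocks₁₁_le R
      _ = 1 * sNorm R := (one_mul _).symm
      _ ≤ m * sNorm R := mul_le_mul_of_nonneg_right hm1 hr0
  have b3 : sNorm R.toBlocks₁₂ / γ ≤ m * sNorm R := by
    calc sNorm R.toBlocks₁₂ / γ ≤ sNorm R / γ :=
          (div_le_div_iff_of_pos_right hγ).mpr (sNorm_toBlocks₁₂_le R)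
      _ = (1 / γ) * sNorm R := by ring
      _ ≤ m * sNorm R := mul_le_mul_of_nonneg_right hmγ hr0
  have b4 : sNorm R.toBlocks₂₂ ≤ m * sNorm R := by
    calc sNorm R.toBlocks₂₂ ≤ sNorm R := sNorm_toBlocks₂₂_le R
      _ = 1 * sNorm R := (one_mul _).symm
      _ ≤ m * sNorm R := mul_le_mul_of_nonneg_right hm1 hr0
  simp only [Phi, calAdag]
  exact max_le (max_le (b1.trans hmR) (b2.trans hmR)) (max_le (b3.trans hmR) (b4.trans hmR))


end
end

section
/- Let L⋆, L be symmetric p×p real matrices and σ > 0. Suppose every nonzero singular value of L⋆ is at least σ, rank(L) ≤ rank(L⋆), and 8·‖L − L⋆‖₂ ≤ σ, where ‖·‖₂ is the spectral norm. Then rank(L) = rank(L⋆), and L has the same inertia as L⋆: the number of positive eigenvalues (counted with multiplicity) of L equals that of L⋆, and likewise for negative eigenvalues. -/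
/-!
Write the quadratic form of a symmetric matrix in its eigenbasis as `∑ λᵢ ⟪bᵢ, x⟫²`. On the span
`V` of the eigenvectors of `L⋆` with eigenvalue `≥ σ`, the form of `L` is at least
`(σ - ‖L - L⋆‖₂) ‖x‖² > 0`, so `V` meets the span of the eigenvectors of `L` with eigenvalue `≤ 0`
trivially and `L` has at least `dim V` positive eigenvalues. The same argument applied to the
negated forms bounds the negative eigenvalues. The rank is the number of positive plus the number
of negative eigenvalues, so `rank L ≤ rank L⋆` forces both inequalities to be equalities.
-/

open Matrix

noncomputable section

open Finset
open scoped RealInnerProductSpace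

namespace OrthonormalBasis

variable {ι E : Type*} [Fintype ι] [NormedAddCommGroup E] [InnerProductSpace ℝ E]
  (b : OrthonormalBasis ι ℝ E)

lemma inner_eq_zero_of_mem_span_image {S : Set ι} {x : E} (hx : x ∈ Submodule.span ℝ (b '' S))
    {i : ι} (hi : i ∉ S) : ⟪b i, x⟫ = 0 := by
  have hle : Submodule.span ℝ (b '' S) ≤ (ℝ ∙ b i)ᗮ := by
    rw [Submodule.span_le]
    rintro _ ⟨j, hj, rfl⟩
    exact Submodule.mem_orthogonal_singleton_iff_inner_right.mpr
      (b.orthonormal.2 fun hij => hi (hij ▸ hj))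
  exact Submodule.mem_orthogonal_singleton_iff_inner_right.mp (hle hx)

lemma finrank_span_image (S : Finset ι) :
    Module.finrank ℝ (Submodule.span ℝ (b '' S)) = #S := by
  rw [Set.image_eq_range]
  exact (finrank_span_eq_card
    (b.orthonormal.linearIndependent.comp _ Subtype.val_injective)).trans (Fintype.card_coe S)

variable (d : ι → ℝ)

lemma mul_norm_sq_le_sum_mul_inner_sq {S : Set ι} {c : ℝ} (hS : ∀ i ∈ S, c ≤ d i) {x : E}
    (hx : x ∈ Submodule.span ℝ (b '' S)) :
    c * ‖x‖ ^ 2 ≤ ∑ i, d i * ⟪b i, x⟫ ^ 2 := by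
  rw [← b.sum_sq_inner_right, Finset.mul_sum]
  refine Finset.sum_le_sum fun i _ => ?_
  by_cases hi : i ∈ S
  · exact mul_le_mul_of_nonneg_right (hS i hi) (sq_nonneg _)
  · simp [b.inner_eq_zero_of_mem_span_image hx hi]

lemma finrank_le_card_pos_of_pos {V : Submodule ℝ E}
    (hV : ∀ x ∈ V, x ≠ 0 → 0 < ∑ i, d i * ⟪b i, x⟫ ^ 2) :
    Module.finrank ℝ V ≤ #{i | 0 < d i} := by
  set W := Submodule.span ℝ (b '' ↑({i | d i ≤ 0} : Finset ι))
  have hW : ∀ x ∈ W, ∑ i, d i * ⟪b i, x⟫ ^ 2 ≤ 0 := fun x hx => by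
    simpa using b.mul_norm_sq_le_sum_mul_inner_sq (-d) (c := 0) (by simp) hx
  have hdisj : Disjoint V W := Submodule.disjoint_def.mpr fun x hxV hxW => by
    by_contra hx
    exact (hV x hxV hx).not_ge (hW x hxW)
  have := b.toBasis.finiteDimensional_of_finite
  have hdim := Submodule.finrank_add_finrank_le_of_disjoint hdisj
  rw [b.finrank_span_image, Module.finrank_eq_card_basis b.toBasis] at hdim
  have hsplit := card_filter_add_card_filter_not (s := univ) fun i => 0 < d i
  simp only [not_lt, card_univ] at hsplit
  omega

lemma card_le_card_pos_of_abs_sub_le {ι' : Type*} [Fintype ι'] (b' : OrthonormalBasis ι' ℝ E)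
    (d' : ι' → ℝ) {S : Finset ι} {c ε : ℝ} (hS : ∀ i ∈ S, c ≤ d i) (hεc : ε < c)
    (hclose : ∀ x, |∑ i, d' i * ⟪b' i, x⟫ ^ 2 - ∑ i, d i * ⟪b i, x⟫ ^ 2| ≤ ε * ‖x‖ ^ 2) :
    #S ≤ #{i | 0 < d' i} := by
  rw [← b.finrank_span_image S]
  refine b'.finrank_le_card_pos_of_pos d' fun x hx hx0 => ?_
  have hlow := b.mul_norm_sq_le_sum_mul_inner_sq d hS hx
  have hpert := neg_le_of_abs_le (hclose x)
  have hx2 : 0 < ‖x‖ ^ 2 := by positivity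
  nlinarith

end OrthonormalBasis

lemma abs_inner_toEuclideanLin_self_le {n : Type*} [Fintype n] [DecidableEq n]
    (M : Matrix n n ℝ) (x : EuclideanSpace ℝ n) :
    |⟪x, toEuclideanLin M x⟫| ≤ sNorm M * ‖x‖ ^ 2 :=
  calc |⟪x, toEuclideanLin M x⟫| ≤ ‖x‖ * ‖(toEuclideanLin M).toContinuousLinearMap x‖ :=
        abs_real_inner_le_norm _ _
    _ ≤ ‖x‖ * (sNorm M * ‖x‖) := by gcongr; exact ContinuousLinearMap.le_opNorm _ _
    _ = sNorm M * ‖x‖ ^ 2 := by ring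

namespace Matrix.IsHermitian

variable {n : Type*} [Fintype n] [DecidableEq n] {A B : Matrix n n ℝ}

lemma toEuclideanLin_eigenvectorBasis (hA : A.IsHermitian) (i : n) :
    toEuclideanLin A (hA.eigenvectorBasis i) = hA.eigenvalues i • hA.eigenvectorBasis i := by
  ext j
  simpa using congrFun (hA.mulVec_eigenvectorBasis i) j

lemma inner_toEuclideanLin_self (hA : A.IsHermitian) (x : EuclideanSpace ℝ n) :
    ⟪x, toEuclideanLin A x⟫ = ∑ i, hA.eigenvalues i * ⟪hA.eigenvectorBasis i, x⟫ ^ 2 := by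
  rw [← hA.eigenvectorBasis.sum_inner_mul_inner]
  refine sum_congr rfl fun i _ => ?_
  rw [← isSymmetric_toEuclideanLin_iff.mpr hA, toEuclideanLin_eigenvectorBasis,
    real_inner_smul_left, real_inner_comm x]
  ring

lemma abs_sum_eigenvalues_sub_le (hA : A.IsHermitian) (hB : B.IsHermitian)
    (x : EuclideanSpace ℝ n) :
    |∑ i, hB.eigenvalues i * ⟪hB.eigenvectorBasis i, x⟫ ^ 2 -
        ∑ i, hA.eigenvalues i * ⟪hA.eigenvectorBasis i, x⟫ ^ 2| ≤ sNorm (B - A) * ‖x‖ ^ 2 := by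
  rw [← hA.inner_toEuclideanLin_self, ← hB.inner_toEuclideanLin_self, ← inner_sub_right,
    ← LinearMap.sub_apply, ← map_sub]
  exact abs_inner_toEuclideanLin_self_le _ x

lemma card_le_card_pos_eigenvalues (hA : A.IsHermitian) (hB : B.IsHermitian) {S : Finset n}
    {c : ℝ} (hS : ∀ i ∈ S, c ≤ hA.eigenvalues i) (hBA : sNorm (B - A) < c) :
    #S ≤ #{i | 0 < hB.eigenvalues i} :=
  hA.eigenvectorBasis.card_le_card_pos_of_abs_sub_le _ hB.eigenvectorBasis _ hS hBA
    (hA.abs_sum_eigenvalues_sub_le hB)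

lemma card_le_card_neg_eigenvalues (hA : A.IsHermitian) (hB : B.IsHermitian) {S : Finset n}
    {c : ℝ} (hS : ∀ i ∈ S, hA.eigenvalues i ≤ -c) (hBA : sNorm (B - A) < c) :
    #S ≤ #{i | hB.eigenvalues i < 0} := by
  simpa using hA.eigenvectorBasis.card_le_card_pos_of_abs_sub_le (-hA.eigenvalues)
    hB.eigenvectorBasis (-hB.eigenvalues) (fun i hi => le_neg.mp (hS i hi)) hBA fun x => by
      simp only [Pi.neg_apply, neg_mul, sum_neg_distrib, neg_sub_neg]
      rw [abs_sub_comm]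
      exact hA.abs_sum_eigenvalues_sub_le hB x

lemma rank_eq_card_pos_add_card_neg (hA : A.IsHermitian) :
    A.rank = #{i | 0 < hA.eigenvalues i} + #{i | hA.eigenvalues i < 0} := by
  rw [hA.rank_eq_card_non_zero_eigs, Fintype.card_subtype, ← card_union_of_disjoint
    (disjoint_filter.mpr fun _ _ hpos hneg => hpos.not_gt hneg), ← filter_or]
  simp only [ne_iff_lt_or_gt, or_comm]

end Matrix.IsHermitian

/-- rank and inertia correctness: if every nonzero singular value of the
symmetric matrix `L⋆` is at least `σ` (for a symmetric matrix, the singular values are the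
absolute values of the eigenvalues), `rank(L) ≤ rank(L⋆)` and `8‖L − L⋆‖₂ ≤ σ`, then
`rank(L) = rank(L⋆)` and `L` has the same inertia as `L⋆`. -/
theorem stmt_10 (p : ℕ) (Lstar L : Matrix (Fin p) (Fin p) ℝ)
    (hLstar : Lstar.IsHermitian) (hL : L.IsHermitian) (σ : ℝ) (hσ : 0 < σ)
    (hsv : ∀ i, hLstar.eigenvalues i ≠ 0 → σ ≤ |hLstar.eigenvalues i|)
    (hrank : L.rank ≤ Lstar.rank)
    (hclose : 8 * sNorm (L - Lstar) ≤ σ) :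
    L.rank = Lstar.rank ∧
      (Finset.univ.filter fun i => 0 < hL.eigenvalues i).card =
        (Finset.univ.filter fun i => 0 < hLstar.eigenvalues i).card ∧
      (Finset.univ.filter fun i => hL.eigenvalues i < 0).card =
        (Finset.univ.filter fun i => hLstar.eigenvalues i < 0).card := by
  have hgap : sNorm (L - Lstar) < σ := by linarith
  have hpos : #{i | 0 < hLstar.eigenvalues i} ≤ #{i | 0 < hL.eigenvalues i} :=
    hLstar.card_le_card_pos_eigenvalues hL (fun i hi => by
      have hi := (mem_filter.mp hi).2
      simpa [abs_of_pos hi] using hsv i hi.ne') hgap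
  have hneg : #{i | hLstar.eigenvalues i < 0} ≤ #{i | hL.eigenvalues i < 0} :=
    hLstar.card_le_card_neg_eigenvalues hL (fun i hi => by
      have hi := (mem_filter.mp hi).2
      simpa [abs_of_neg hi, le_neg] using hsv i hi.ne) hgap
  have := hL.rank_eq_card_pos_add_card_neg
  have := hLstar.rank_eq_card_pos_add_card_neg
  omega

end
end
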